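/- For every integer k ≥ 3, the only k-cycle in S_k (written with smallest element 1 first) that cycle-avoids the pattern 1 3 2 is the identity-like cycle (1, 2, 3, …, k). Hence L_k^{ca}(132) = 1 for all k ≥ 1. -/

import Mathlib

/-- A cyclic occurrence of the pattern `τ ∈ S_j` in the cycle word of an `m`-cycle,
where the `m`-cycle in `S_m` (written with smallest element first) is represented by
the word `c 0, c 1, …, c (m-1)` (0-based values) with `c 0 = 0`. -/
def HasCyclicWordOcc {m j : ℕ} (hm : 0 < m) (c : Equiv.Perm (Fin m))
    (τ : Equiv.Perm (Fin j)) : Prop :=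
  j ≤ m ∧ ∃ (r : ℕ) (f : Fin j → ℕ), StrictMono f ∧ (∀ s : Fin j, (s : ℕ) = 0 → f s = 0) ∧
    (∀ s : Fin j, f s ≤ m - 1) ∧
    ∀ s t : Fin j,
      (c ⟨(r + f s) % m, Nat.mod_lt _ hm⟩ < c ⟨(r + f t) % m, Nat.mod_lt _ hm⟩ ↔ τ s < τ t)

lemma id_avoids {k : ℕ} (hk : 0 < k) :
    ¬ HasCyclicWordOcc hk (1 : Equiv.Perm (Fin k)) (Equiv.swap (1 : Fin 3) 2) := by
  rintro ⟨h3, r, f, hmono, h0, hle, hpat⟩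
  have hf0 : f 0 = 0 := h0 0 rfl
  have hf01 : f 0 < f 1 := hmono (by decide)
  have hf12 : f 1 < f 2 := hmono (by decide)
  have hle1 := hle 1
  have hle2 := hle 2
  have h02 : ((r + f 0) % k) < ((r + f 2) % k) := by
    have := (hpat 0 2).mpr (by decide)
    simpa [Fin.lt_def] using this
  have h21 : ((r + f 2) % k) < ((r + f 1) % k) := by
    have := (hpat 2 1).mpr (by decide)
    simpa [Fin.lt_def] using this
  have hr : r % k < k := Nat.mod_lt _ hk
  have e0 : (r + f 0) % k = r % k := by rw [hf0]; simp
  have e1 : (r + f 1) % k = (r % k + f 1) % k := (Nat.mod_add_mod r k (f 1)).symm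
  have e2 : (r + f 2) % k = (r % k + f 2) % k := (Nat.mod_add_mod r k (f 2)).symm
  rw [e0, e2] at h02
  rw [e2, e1] at h21
  have hm1 : (r % k + f 1) % k = r % k + f 1 ∨
      (k ≤ r % k + f 1 ∧ (r % k + f 1) % k = r % k + f 1 - k) := by
    rcases Nat.lt_or_ge (r % k + f 1) k with h | h
    · exact Or.inl (Nat.mod_eq_of_lt h)
    · exact Or.inr ⟨h, by rw [Nat.mod_eq_sub_mod h]; exact Nat.mod_eq_of_lt (by omega)⟩
  have hm2 : (r % k + f 2) % k = r % k + f 2 ∨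
      (k ≤ r % k + f 2 ∧ (r % k + f 2) % k = r % k + f 2 - k) := by
    rcases Nat.lt_or_ge (r % k + f 2) k with h | h
    · exact Or.inl (Nat.mod_eq_of_lt h)
    · exact Or.inr ⟨h, by rw [Nat.mod_eq_sub_mod h]; exact Nat.mod_eq_of_lt (by omega)⟩
  rcases hm1 with h | ⟨h, h'⟩ <;> rcases hm2 with g | ⟨g, g'⟩ <;> omega

lemma le_apply_of_strictMono {k : ℕ} {g : Fin k → Fin k} (hg : StrictMono g) :
    ∀ n (hn : n < k), n ≤ (g ⟨n, hn⟩ : ℕ) := by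
  intro n
  induction n with
  | zero => intro hn; exact Nat.zero_le _
  | succ n ih =>
    intro hn
    have hn' : n < k := by omega
    have h1 : g ⟨n, hn'⟩ < g ⟨n + 1, hn⟩ :=
      hg (Fin.mk_lt_mk.mpr (Nat.lt_succ_self n))
    have h2 := ih hn'
    have h1' : (g ⟨n, hn'⟩ : ℕ) < (g ⟨n + 1, hn⟩ : ℕ) := h1
    omega

lemma symm_strictMono {k : ℕ} {c : Equiv.Perm (Fin k)} (hc : StrictMono c) :
    StrictMono ⇑c.symm := by
  intro a b hab
  rcases lt_trichotomy (c.symm a) (c.symm b) with h | h | h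
  · exact h
  · exact absurd (by simpa using congrArg c h) (fun e => absurd e (ne_of_lt hab))
  · have := hc h
    simp at this
    exact absurd hab (not_lt.mpr this.le)

lemma eq_one_of_strictMono {k : ℕ} {c : Equiv.Perm (Fin k)} (hc : StrictMono c) : c = 1 := by
  have key : ∀ x : Fin k, c x = x := by
    intro x
    have h1 : (x : ℕ) ≤ (c x : ℕ) := by
      simpa using le_apply_of_strictMono hc x.val x.isLt
    have h2 : ((c x : Fin k) : ℕ) ≤ ((c.symm (c x) : Fin k) : ℕ) := by
      have := le_apply_of_strictMono (symm_strictMono hc) (c x : ℕ) (c x).isLt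
      simpa using this
    rw [Equiv.symm_apply_apply] at h2
    exact Fin.ext (le_antisymm h2 h1)
  ext x
  simp [key x]

lemma main_occ {k : ℕ} (hk : 3 ≤ k) (c : Equiv.Perm (Fin k))
    (h0 : c ⟨0, Nat.lt_of_lt_of_le (Nat.zero_lt_succ 2) hk⟩ = ⟨0, Nat.lt_of_lt_of_le (Nat.zero_lt_succ 2) hk⟩) (hne : c ≠ 1) :
    HasCyclicWordOcc (Nat.lt_of_lt_of_le (Nat.zero_lt_succ 2) hk) c (Equiv.swap (1 : Fin 3) 2) := by
  have hdesc : ∃ i, ∃ hi : i + 1 < k, c ⟨i + 1, hi⟩ < c ⟨i, by omega⟩ := by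
    by_contra hno
    push_neg at hno
    apply hne
    apply eq_one_of_strictMono
    have step : ∀ i (hi : i + 1 < k), c ⟨i, by omega⟩ < c ⟨i + 1, hi⟩ := by
      intro i hi
      rcases lt_or_eq_of_le (hno i hi) with h | h
      · exact h
      · exact absurd (c.injective h) (by simp [Fin.ext_iff])
    intro a b hab
    obtain ⟨bv, hbv⟩ := b
    induction bv with
    | zero => exact absurd (show (a : ℕ) < 0 from hab) (by omega)
    | succ n ih =>
      have hab' : (a : ℕ) < n + 1 := hab
      rcases Nat.lt_or_ge (a : ℕ) n with h | h
      · exact lt_trans (ih (Nat.lt_of_succ_lt hbv) (show (a : ℕ) < n from h)) (step n hbv)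
      · have ha : a = ⟨n, Nat.lt_of_succ_lt hbv⟩ := Fin.ext (show (a : ℕ) = n by omega)
        rw [ha]
        exact step n hbv
  obtain ⟨i, hi, hgt⟩ := hdesc
  have hipos : 1 ≤ i := by
    rcases Nat.eq_zero_or_pos i with h | h
    · subst h
      rw [h0] at hgt
      exact absurd hgt (by simp [Fin.lt_def])
    · exact h
  have hv2pos : (0 : ℕ) < (c ⟨i + 1, hi⟩ : ℕ) := by
    rcases Nat.eq_zero_or_pos (c ⟨i + 1, hi⟩ : ℕ) with h | h
    · exfalso
      have : c ⟨i + 1, hi⟩ = c ⟨0, by omega⟩ := by rw [h0]; exact Fin.ext h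
      have := c.injective this
      simp [Fin.ext_iff] at this
    · exact h
  rw [Fin.lt_def] at hgt
  have hc0 : (c ⟨0, by omega⟩ : ℕ) = 0 := by rw [h0]
  refine ⟨by omega, 0, ![0, i, i + 1], ?_, ?_, ?_, ?_⟩
  · intro a b hab
    rw [Fin.lt_def] at hab
    rcases a with ⟨av, ha⟩
    rcases b with ⟨bv, hb⟩
    simp only [Fin.val_mk] at hab
    interval_cases av <;> interval_cases bv <;>
      simp only [Fin.mk_zero, Fin.mk_one, show (⟨2, by omega⟩ : Fin 3) = 2 from rfl,
        Matrix.cons_val_zero, Matrix.cons_val_one, Matrix.cons_val_two,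
        Matrix.head_cons, Matrix.tail_cons] <;> omega
  · intro s hs
    rcases s with ⟨sv, hsv⟩
    simp only [Fin.val_mk] at hs
    subst hs
    simp
  · intro s
    rcases s with ⟨sv, hsv⟩
    interval_cases sv <;>
      simp only [Fin.mk_zero, Fin.mk_one, show (⟨2, by omega⟩ : Fin 3) = 2 from rfl,
        Matrix.cons_val_zero, Matrix.cons_val_one, Matrix.cons_val_two,
        Matrix.head_cons, Matrix.tail_cons] <;> omega
  · intro s t
    have E : ∀ (x : ℕ) (hx : x < k),
        c ⟨(0 + x) % k, Nat.mod_lt _ (show 0 < k by omega)⟩ = c ⟨x, hx⟩ := by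
      intro x hx
      congr 1
      exact Fin.ext (by simp [Nat.mod_eq_of_lt hx])
    have sw : ∀ u : Fin 3, ((Equiv.swap (1 : Fin 3) 2) u : ℕ) =
        if (u : ℕ) = 0 then 0 else if (u : ℕ) = 1 then 2 else 1 := by decide
    rw [Fin.lt_def, Fin.lt_def, sw s, sw t]
    rcases s with ⟨sv, hsv⟩
    rcases t with ⟨tv, htv⟩
    simp only [Fin.val_mk]
    interval_cases sv <;> interval_cases tv <;>
      simp only [Fin.mk_zero, Fin.mk_one, show (⟨2, by omega⟩ : Fin 3) = 2 from rfl,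
        Matrix.cons_val_zero, Matrix.cons_val_one, Matrix.cons_val_two,
        Matrix.head_cons, Matrix.tail_cons] <;>
      simp only [E 0 (by omega), E i (by omega), E (i + 1) (by omega), hc0] <;>
      norm_num <;> omega

lemma eq_one_of_small {k : ℕ} (hk1 : 1 ≤ k) (hk : k < 3) (c : Equiv.Perm (Fin k))
    (h0 : c ⟨0, by omega⟩ = ⟨0, by omega⟩) : c = 1 := by
  have hk' : k = 1 ∨ k = 2 := by omega
  rcases hk' with h | h <;> subst h
  · ext x
    obtain ⟨v, hv⟩ := x
    interval_cases v
    simpa using h0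
  · ext x
    obtain ⟨v, hv⟩ := x
    interval_cases v
    · simpa using congrArg Fin.val h0
    · have h1 : c ⟨1, hv⟩ ≠ ⟨0, by omega⟩ := by
        rw [← h0]
        exact fun e => absurd (c.injective e) (by simp [Fin.ext_iff])
      have hne : (c ⟨1, hv⟩ : ℕ) ≠ 0 := fun e => h1 (Fin.ext e)
      have hlt := (c ⟨1, hv⟩).isLt
      show (c ⟨1, hv⟩ : ℕ) = _
      simp only [Equiv.Perm.coe_one, id_eq]
      omega

/-- For `k ≥ 3`, the only `k`-cycle in `S_k` (smallest element first) cycle-avoiding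
the pattern `1 3 2` (0-based word `0 2 1`, i.e. `Equiv.swap 1 2` in `S_3`) is the
cycle `(1, 2, …, k)`, i.e. the identity word; hence `L_k^{ca}(132) = 1` for all `k ≥ 1`. -/
theorem stmt2 :
    (∀ k : ℕ, ∀ hk : 3 ≤ k, ∀ c : Equiv.Perm (Fin k), c ⟨0, by omega⟩ = ⟨0, by omega⟩ →
      (¬ HasCyclicWordOcc (by omega) c (Equiv.swap (1 : Fin 3) 2) ↔ c = 1)) ∧
    (∀ k : ℕ, ∀ hk : 1 ≤ k,
      Nat.card {c : Equiv.Perm (Fin k) // c ⟨0, by omega⟩ = ⟨0, by omega⟩ ∧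
        ¬ HasCyclicWordOcc (by omega) c (Equiv.swap (1 : Fin 3) 2)} = 1) := by
  constructor
  · intro k hk c h0
    constructor
    · intro hav
      by_contra hne
      exact hav (main_occ hk c h0 hne)
    · intro h1
      subst h1
      exact id_avoids (by omega)
  · intro k hk
    have eq1 : ∀ c : Equiv.Perm (Fin k), c ⟨0, by omega⟩ = ⟨0, by omega⟩ →
        ¬ HasCyclicWordOcc (by omega : 0 < k) c (Equiv.swap (1 : Fin 3) 2) → c = 1 := by
      intro c h0 hav
      rcases lt_or_ge k 3 with h | h
      · exact eq_one_of_small hk h c h0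
      · by_contra hne
        exact hav (main_occ h c h0 hne)
    rw [Nat.card_eq_one_iff_unique]
    constructor
    · constructor
      rintro ⟨a, ha0, hav⟩ ⟨b, hb0, hbv⟩
      exact Subtype.ext ((eq1 a ha0 hav).trans (eq1 b hb0 hbv).symm)
    · exact ⟨⟨1, rfl, id_avoids (by omega)⟩⟩
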